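/- Each of the four vector fields η₁, η₂, η₃, η₄ is a Killing vector field of the McLenaghan–Tariq–Tupper metric: for each a ∈ {1,2,3,4} and all indices i, j ∈ {1,2,3,4}, Σ_k ( η_a^k ∂_k g_{ij} + g_{kj} ∂_i η_a^k + g_{ik} ∂_j η_a^k ) = 0 identically on ℝ⁴. -/

import Mathlib

/-- Partial derivative `∂f/∂xⁱ` of a real-valued function on `ℝ⁴`. -/
noncomputable def pd (i : Fin 4) (f : (Fin 4 → ℝ) → ℝ) (x : Fin 4 → ℝ) : ℝ :=
  fderiv ℝ f x (Pi.single i 1)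
/-- The McLenaghan–Tariq–Tupper metric components `g_{ij}(x)` (indices `0,…,3` for `1,…,4`). -/
noncomputable def mttMetric (k : ℝ) (x : Fin 4 → ℝ) : Matrix (Fin 4) (Fin 4) ℝ :=
  !![1, 1, 0, -k * x 2;
     1, 0, 0, -k * x 2;
     0, 0, -Real.exp (-(k * x 1)), 0;
     -k * x 2, -k * x 2, 0, k ^ 2 * (x 2) ^ 2 - Real.exp (k * x 1)]
/-- The Killing vector fields `η₁,…,η₄` (indices `0,…,3`). -/
noncomputable def η (k : ℝ) (a : Fin 4) (x : Fin 4 → ℝ) : Fin 4 → ℝ :=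
  ![![1, 0, 0, 0],
    ![0, 0, 0, 1],
    ![k * x 3, 0, 1, 0],
    ![-2, 1, k / 2 * x 2, -(k / 2) * x 3]] a

/-!
Every `η_a` is affine, so its Jacobian `J` is constant, and the metric depends on `x` only
through `x²` and `x³`. The Killing equation for `η_a` is therefore the matrix identity
`Σ_l η_a^l ∂_l g + J g + g Jᵀ = 0`, a polynomial identity in `k`, `x`, `exp (± k x²)` that is
checked entrywise. For `η₄` the `exp` terms cancel because `∂₂ exp (± k x²) = ± k exp (± k x²)`
balances the rescaling of `x³`, `x⁴` by `± k/2`.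
-/

section PartialDerivative

variable {f g : (Fin 4 → ℝ) → ℝ} {x : Fin 4 → ℝ} (l : Fin 4)

lemma pd_const (c : ℝ) : pd l (fun _ => c) x = 0 := by
  simp [pd]

lemma pd_coord (m : Fin 4) : pd l (fun y => y m) x = if l = m then 1 else 0 := by
  rw [pd, fderiv_apply differentiableAt_id m]
  simp [Pi.single_apply, eq_comm]

lemma pd_sub (hf : DifferentiableAt ℝ f x) (hg : DifferentiableAt ℝ g x) :
    pd l (fun y => f y - g y) x = pd l f x - pd l g x := by
  simp [pd, fderiv_fun_sub hf hg]

lemma pd_neg : pd l (fun y => -f y) x = -pd l f x := by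
  simp [pd]

lemma pd_mul (hf : DifferentiableAt ℝ f x) (hg : DifferentiableAt ℝ g x) :
    pd l (fun y => f y * g y) x = f x * pd l g x + g x * pd l f x := by
  simp [pd, fderiv_fun_mul hf hg]

lemma pd_pow (hf : DifferentiableAt ℝ f x) (n : ℕ) :
    pd l (fun y => f y ^ n) x = n * f x ^ (n - 1) * pd l f x := by
  simp [pd, fderiv_fun_pow n hf, mul_assoc]

lemma pd_exp (hf : DifferentiableAt ℝ f x) :
    pd l (fun y => Real.exp (f y)) x = Real.exp (f x) * pd l f x := by
  simp [pd, hf]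

end PartialDerivative

/-- `mttMetricDeriv k x l = ∂_l g (x)`. -/
noncomputable def mttMetricDeriv (k : ℝ) (x : Fin 4 → ℝ) : Fin 4 → Matrix (Fin 4) (Fin 4) ℝ :=
  ![0,
    !![0, 0, 0, 0;
       0, 0, 0, 0;
       0, 0, k * Real.exp (-(k * x 1)), 0;
       0, 0, 0, -(k * Real.exp (k * x 1))],
    !![0, 0, 0, -k;
       0, 0, 0, -k;
       0, 0, 0, 0;
       -k, -k, 0, 2 * k ^ 2 * x 2],
    0]

/-- `ηJacobian k a i l = ∂_i η_a^l`. -/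
noncomputable def ηJacobian (k : ℝ) : Fin 4 → Matrix (Fin 4) (Fin 4) ℝ :=
  ![0,
    0,
    !![0, 0, 0, 0;
       0, 0, 0, 0;
       0, 0, 0, 0;
       k, 0, 0, 0],
    !![0, 0, 0, 0;
       0, 0, 0, 0;
       0, 0, k / 2, 0;
       0, 0, 0, -(k / 2)]]

lemma pd_mttMetric (k : ℝ) (l i j : Fin 4) (x : Fin 4 → ℝ) :
    pd l (fun y => mttMetric k y i j) x = mttMetricDeriv k x l i j := by
  fin_cases i <;> fin_cases j <;> simp only [Fin.zero_eta, Fin.mk_one, Fin.reduceFinMk] <;>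
    simp (disch := fun_prop) only [mttMetric, Matrix.of_apply, Matrix.cons_val', Matrix.cons_val,
      Matrix.empty_val', Matrix.cons_val_fin_one, pd_sub, pd_mul, pd_pow, pd_exp, pd_const,
      pd_coord, pd_neg] <;>
    fin_cases l <;>
    simp only [Fin.zero_eta, Fin.mk_one, Fin.reduceFinMk, mttMetricDeriv, Matrix.of_apply,
      Matrix.cons_val', Matrix.cons_val, Matrix.empty_val', Matrix.cons_val_fin_one,
      Matrix.zero_apply, Fin.reduceEq, reduceIte] <;>
    ring

lemma pd_η (k : ℝ) (a i l : Fin 4) (x : Fin 4 → ℝ) :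
    pd i (fun y => η k a y l) x = ηJacobian k a i l := by
  fin_cases a <;> fin_cases l <;> simp only [Fin.zero_eta, Fin.mk_one, Fin.reduceFinMk] <;>
    simp (disch := fun_prop) only [η, Matrix.cons_val', Matrix.cons_val, Matrix.empty_val',
      Matrix.cons_val_fin_one, pd_mul, pd_const, pd_coord] <;>
    fin_cases i <;> simp [ηJacobian]

lemma lieDerivative_mttMetric_η_eq_zero (k : ℝ) (a : Fin 4) (x : Fin 4 → ℝ) :
    ∑ l, η k a x l • mttMetricDeriv k x l + ηJacobian k a * mttMetric k x
      + mttMetric k x * (ηJacobian k a).transpose = 0 := by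
  ext i j
  fin_cases a <;> fin_cases i <;> fin_cases j <;>
    simp only [Fin.zero_eta, Fin.mk_one, Fin.reduceFinMk, η, ηJacobian, mttMetric, mttMetricDeriv,
      Fin.sum_univ_four, Matrix.mul_apply, Matrix.add_apply, Matrix.smul_apply,
      Matrix.transpose_apply, smul_eq_mul, Matrix.of_apply, Matrix.cons_val', Matrix.cons_val,
      Matrix.empty_val', Matrix.cons_val_fin_one, Matrix.zero_apply] <;>
    ring

theorem eta_killing_general (k : ℝ) (a i j : Fin 4) (x : Fin 4 → ℝ) :
    ∑ l : Fin 4,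
      (η k a x l * pd l (fun y => mttMetric k y i j) x
        + mttMetric k x l j * pd i (fun y => η k a y l) x
        + mttMetric k x i l * pd j (fun y => η k a y l) x) = 0 := by
  have h := congrFun₂ (lieDerivative_mttMetric_η_eq_zero k a x) i j
  simp only [Matrix.add_apply, Matrix.sum_apply, Matrix.smul_apply, Matrix.mul_apply,
    Matrix.transpose_apply, smul_eq_mul, Matrix.zero_apply, mul_comm (ηJacobian k a i _)] at h
  simp only [pd_mttMetric, pd_η, Finset.sum_add_distrib]
  linear_combination h

/-- Each `η_a` is a Killing vector field of the McLenaghan–Tariq–Tupper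
metric: `Σ_k (η_a^k ∂_k g_{ij} + g_{kj} ∂_i η_a^k + g_{ik} ∂_j η_a^k) = 0` on `ℝ⁴`. -/
theorem eta_killing (k : ℝ) (hk : 0 < k) (a i j : Fin 4) (x : Fin 4 → ℝ) :
    ∑ l : Fin 4,
      (η k a x l * pd l (fun y => mttMetric k y i j) x
        + mttMetric k x l j * pd i (fun y => η k a y l) x
        + mttMetric k x i l * pd j (fun y => η k a y l) x) = 0 :=
  eta_killing_general k a i j x
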